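/- Let G = (V, w) be a weighted graph and x, y, z nodes with x ≠ y, y ≠ z, x ≠ z, such that (x, y) and (y, z) are both antipolar pairs (ν_G({x,y}) < 0 and ν_G({y,z}) < 0). Then {x, z} is non-separable. -/

import Mathlib

/-!
A min-cut that does not separate `{x, y}` would make the minimum over non-separating cuts
no larger than the minimum over separating ones, so `ν({x, y}) < 0` forces every min-cut to
separate `x` from `y`; likewise `y` from `z`. Hence every min-cut puts `x` and `z` on the side
opposite to `y`, and no min-cut separates `{x, z}`.
-/

open Finset

variable {V : Type*}

/-- Cut capacity of a cut `S` in the weighted graph `(V, w)`: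
`c(S) = Σ_{u ∈ S, v ∈ V \ S} w(u,v)`. -/
noncomputable def cutVal [Fintype V] [DecidableEq V] (w : V → V → ℝ) (S : Finset V) : ℝ :=
  ∑ u ∈ S, ∑ v ∈ Sᶜ, w u v

/-- Minimum cut value `MC(G) = min_{S ⊆ V} c(S)` (cuts range over all subsets). -/
noncomputable def minCutVal [Fintype V] [DecidableEq V] (w : V → V → ℝ) : ℝ :=
  sInf (Set.range (cutVal w))

/-- `S` separates `X` iff `X ∩ S ∉ {∅, X}`. -/
def Separates [DecidableEq V] (S X : Finset V) : Prop :=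
  X ∩ S ≠ ∅ ∧ X ∩ S ≠ X

/-- `X` is non-separable: no min-cut separates `X`. -/
def NonSepSet [Fintype V] [DecidableEq V] (w : V → V → ℝ) (X : Finset V) : Prop :=
  ∀ S : Finset V, cutVal w S = minCutVal w → ¬ Separates S X

/-- `X` is weakly non-separable: some min-cut separates `X` and some min-cut does not. -/
def WeakNonSepSet [Fintype V] [DecidableEq V] (w : V → V → ℝ) (X : Finset V) : Prop :=
  (∃ S : Finset V, cutVal w S = minCutVal w ∧ Separates S X) ∧
  (∃ S : Finset V, cutVal w S = minCutVal w ∧ ¬ Separates S X)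

/-- Non-separability index
`ν_G(X) = min_{S ⊆ V, S ⊖ X} c(S) − min_{S ⊆ V, ¬(S ⊖ X)} c(S)`. -/
noncomputable def nuIdx [Fintype V] [DecidableEq V] (w : V → V → ℝ) (X : Finset V) : ℝ :=
  sInf (cutVal w '' {S : Finset V | Separates S X}) -
  sInf (cutVal w '' {S : Finset V | ¬ Separates S X})

lemma separates_pair_iff [DecidableEq V] (S : Finset V) (a b : V) :
    Separates S {a, b} ↔ ¬(a ∈ S ↔ b ∈ S) := by
  unfold Separates
  by_cases ha : a ∈ S <;> by_cases hb : b ∈ S <;>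
    simp [Finset.ext_iff, ha, hb, forall_and] <;> rintro rfl <;> contradiction

section Cuts

variable [Fintype V] [DecidableEq V] (w : V → V → ℝ)

lemma cutVal_empty : cutVal w ∅ = 0 := by
  simp [cutVal]

lemma minCutVal_le_cutVal (S : Finset V) : minCutVal w ≤ cutVal w S :=
  csInf_le (Set.finite_range _).bddBelow ⟨S, rfl⟩

/-- For `P = ∅` the right-hand side is the junk value `sInf ∅ = 0`, which still bounds
`minCutVal w ≤ cutVal w ∅ = 0`. -/
lemma minCutVal_le_sInf_image (P : Set (Finset V)) :
    minCutVal w ≤ sInf (cutVal w '' P) := by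
  rcases P.eq_empty_or_nonempty with rfl | hP
  · simpa [cutVal_empty] using minCutVal_le_cutVal w ∅
  · exact le_csInf (hP.image _) (by rintro _ ⟨S, -, rfl⟩; exact minCutVal_le_cutVal w S)

lemma separates_of_nuIdx_neg {X S : Finset V} (hX : nuIdx w X < 0)
    (hS : cutVal w S = minCutVal w) : Separates S X := by
  by_contra hsep
  have hB : sInf (cutVal w '' {T | ¬Separates T X}) ≤ minCutVal w :=
    hS ▸ csInf_le ((Set.toFinite _).bddBelow) ⟨S, hsep, rfl⟩
  have hA := minCutVal_le_sInf_image w {T | Separates T X}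
  unfold nuIdx at hX
  linarith

end Cuts

theorem statement_14_general [Fintype V] [DecidableEq V]
    (w : V → V → ℝ)
    (x y z : V)
    (h1 : nuIdx w {x, y} < 0) (h2 : nuIdx w {y, z} < 0) :
    NonSepSet w {x, z} := by
  intro S hS
  have hxy := (separates_pair_iff S x y).mp (separates_of_nuIdx_neg w h1 hS)
  have hyz := (separates_pair_iff S y z).mp (separates_of_nuIdx_neg w h2 hS)
  rw [separates_pair_iff]
  tauto

/-- if `(x, y)` and `(y, z)` are antipolar pairs, then `{x, z}` is
non-separable. -/
theorem statement_14 [Fintype V] [DecidableEq V] [Nonempty V]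
    (w : V → V → ℝ) (hsymm : ∀ a b, w a b = w b a) (hdiag : ∀ a, w a a = 0)
    (x y z : V) (hxy : x ≠ y) (hyz : y ≠ z) (hxz : x ≠ z)
    (h1 : nuIdx w {x, y} < 0) (h2 : nuIdx w {y, z} < 0) :
    NonSepSet w {x, z} :=
  statement_14_general w x y z h1 h2
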